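/- Let i ≥ 1 and let G_i be as above. Then a set X containing s but not t is a connected convex set of G_i if and only if X = {s} ∪ ⋃_{j ∈ J} S_j where for each j, S_j ∈ {∅, {a_j}, {a_j, b_j}}. Hence G_i has exactly 3^i connected convex sets containing s but not t. -/

import Mathlib

/-!
Digraphs are given by an arc relation `A : V → V → Prop` on a vertex type `V`.
A directed path from `a` to `b` is encoded as `a :: (l ++ [b])` where the list
satisfies `List.Chain A` (consecutive arcs) and `List.Nodup` (distinct vertices);
`l` is the list of internal vertices.
-/

variable {V : Type*}

/-- A non-empty vertex set `X` is convex if no directed path between two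
vertices of `X` contains a vertex not in `X`. -/
def ConvexIn (A : V → V → Prop) (X : Set V) : Prop :=
  X.Nonempty ∧ ∀ a b : V, ∀ l : List V, a ∈ X → b ∈ X →
    List.Chain A a (l ++ [b]) → (a :: (l ++ [b])).Nodup → ∀ w ∈ l, w ∈ X

/-- A vertex set is connected if the underlying undirected graph induced on it
is connected. -/
def ConnectedIn (A : V → V → Prop) (X : Set V) : Prop :=
  ((SimpleGraph.fromRel A).induce X).Connected

/-- A digraph is acyclic if it has no directed cycle, equivalently no
nontrivial directed closed walk. -/
def AcyclicDigraph (A : V → V → Prop) : Prop :=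
  ∀ v, ¬ Relation.TransGen A v v

/-- A digraph is connected if its underlying undirected graph is connected. -/
def DigraphConnected (A : V → V → Prop) : Prop :=
  (SimpleGraph.fromRel A).Connected

/-- A source is a vertex with in-degree zero. -/
def IsSourceIn (A : V → V → Prop) (v : V) : Prop := ∀ u, ¬ A u v

/-- A sink is a vertex with out-degree zero. -/
def IsSinkIn (A : V → V → Prop) (v : V) : Prop := ∀ u, ¬ A v u

/-- A cut-vertex of a connected digraph: deleting it disconnects the
underlying undirected graph. -/
def IsCutVertexIn (A : V → V → Prop) (v : V) : Prop :=
  ¬ ((SimpleGraph.fromRel A).induce {u | u ≠ v}).Connected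

/-- Vertices of the digraph `G_i`: a source `s`, a sink `t`, and internal
vertices `a j`, `b j` on the `j`-th path, for `j : Fin i`. -/
inductive GV (i : ℕ) : Type
  | s : GV i
  | t : GV i
  | a : Fin i → GV i
  | b : Fin i → GV i
deriving DecidableEq

/-- Arcs of `G_i`: `s → a j`, `a j → b j`, `b j → t` for each `j`. -/
def GAdj {i : ℕ} : GV i → GV i → Prop
  | GV.s, GV.a _ => True
  | GV.a j, GV.b k => j = k
  | GV.b _, GV.t => True
  | _, _ => False

/-!
If `s ∈ X` and `t ∉ X`, connectivity forces `a j ∈ X` whenever `b j ∈ X`, since the only other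
neighbour of `b j` is `t`. Conversely, such an `X` is closed under in-neighbours, so it is convex
(a directed path ending in `X` stays in `X`) and connected (each vertex reaches `s` backwards).
These sets are determined by a level `0, 1, 2` on each of the `i` paths, whence `3 ^ i`.
-/

section Digraph

variable {A : V → V → Prop} {X : Set V}

lemma convexIn_of_pred_mem (hX : X.Nonempty) (h : ∀ ⦃u v⦄, A u v → v ∈ X → u ∈ X) :
    ConvexIn A X :=
  ⟨hX, fun a _ l _ hb hpath _ w hw =>
    List.IsChain.backwards_concat_induction (· ∈ X) (a :: l) hpath h hb w (.tail a hw)⟩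

lemma induce_fromRel_adj {u v : X} :
    ((SimpleGraph.fromRel A).induce X).Adj u v ↔ (u : V) ≠ v ∧ (A u v ∨ A v u) :=
  SimpleGraph.fromRel_adj ..

lemma connectedIn_of_reachable {r : V} (hr : r ∈ X)
    (h : ∀ v (hv : v ∈ X), ((SimpleGraph.fromRel A).induce X).Reachable ⟨v, hv⟩ ⟨r, hr⟩) :
    ConnectedIn A X :=
  SimpleGraph.connected_iff_exists_forall_reachable _ |>.mpr
    ⟨⟨r, hr⟩, fun v => (h v v.2).symm⟩

lemma ConnectedIn.exists_arc (hX : ConnectedIn A X) {u v : V} (hu : u ∈ X) (hv : v ∈ X)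
    (huv : u ≠ v) : ∃ w ∈ X, A u w ∨ A w u := by
  have : Nontrivial X := ⟨⟨u, hu⟩, ⟨v, hv⟩, by simpa using huv⟩
  obtain ⟨w, hw⟩ := SimpleGraph.exists_adj_iff_not_isIsolated.mpr
    (hX.preconnected.not_isIsolated ⟨u, hu⟩)
  exact ⟨w, w.2, (induce_fromRel_adj.mp hw).2⟩

end Digraph

lemma Set.inter_pair_eq_cases {α : Type*} {X : Set α} {x y : α} (hyx : y ∈ X → x ∈ X) :
    X ∩ {x, y} = ∅ ∨ X ∩ {x, y} = {x} ∨ X ∩ {x, y} = {x, y} := by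
  by_cases hx : x ∈ X <;> by_cases hy : y ∈ X <;> simp [Set.ext_iff, hx, hy] <;> grind

namespace GV

variable {i : ℕ}

def IsSourceSide (X : Set (GV i)) : Prop :=
  s ∈ X ∧ t ∉ X ∧ ∀ j, b j ∈ X → a j ∈ X

section SourceSide

variable {X : Set (GV i)}

lemma IsSourceSide.pred_mem (hX : IsSourceSide X) : ∀ ⦃u v⦄, GAdj u v → v ∈ X → u ∈ X := by
  obtain ⟨hs, ht, hba⟩ := hX
  intro u v huv hv
  cases u <;> cases v <;> simp only [GAdj] at huv
  all_goals first | exact hs | exact absurd hv ht | exact huv ▸ hba _ hv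

lemma IsSourceSide.convexIn (hX : IsSourceSide X) : ConvexIn GAdj X :=
  convexIn_of_pred_mem ⟨s, hX.1⟩ hX.pred_mem

lemma IsSourceSide.connectedIn (hX : IsSourceSide X) : ConnectedIn GAdj X := by
  obtain ⟨hs, ht, hba⟩ := hX
  have back_arc {u v : GV i} (hu : u ∈ X) (hv : v ∈ X) (hne : u ≠ v) (h : GAdj v u) :
      ((SimpleGraph.fromRel GAdj).induce X).Reachable ⟨u, hu⟩ ⟨v, hv⟩ :=
    (induce_fromRel_adj.mpr ⟨hne, .inr h⟩).reachable
  refine connectedIn_of_reachable hs fun v hv => ?_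
  cases v with
  | s => rfl
  | t => exact absurd hv ht
  | a j => exact back_arc hv hs nofun trivial
  | b j => exact (back_arc hv (hba j hv) nofun rfl).trans (back_arc _ hs nofun trivial)

lemma a_mem_of_b_mem (hX : ConnectedIn GAdj X) (hs : s ∈ X) (ht : t ∉ X) {j : Fin i}
    (hb : b j ∈ X) : a j ∈ X := by
  obtain ⟨w, hw, harc⟩ := hX.exists_arc hb hs nofun
  cases w <;> simp only [GAdj, or_false, false_or] at harc
  · exact absurd hw ht
  · exact harc ▸ hw

theorem connectedIn_convexIn_iff_isSourceSide :
    ConnectedIn GAdj X ∧ ConvexIn GAdj X ∧ s ∈ X ∧ t ∉ X ↔ IsSourceSide X :=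
  ⟨fun ⟨hconn, _, hs, ht⟩ => ⟨hs, ht, fun _ => a_mem_of_b_mem hconn hs ht⟩,
    fun hX => ⟨hX.connectedIn, hX.convexIn, hX.1, hX.2.1⟩⟩

theorem exists_pieces_iff_isSourceSide :
    (∃ S : Fin i → Set (GV i),
      (∀ j : Fin i, S j = ∅ ∨ S j = {a j} ∨ S j = {a j, b j}) ∧ X = {s} ∪ ⋃ j, S j) ↔
    IsSourceSide X := by
  constructor
  · rintro ⟨S, hS, rfl⟩
    refine ⟨.inl rfl, ?_, fun j hb => ?_⟩
    · simp only [Set.mem_union, Set.mem_singleton_iff, Set.mem_iUnion, not_or, not_exists]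
      exact ⟨nofun, fun k => by rcases hS k with h | h | h <;> simp [h]⟩
    · simp only [Set.mem_union, Set.mem_singleton_iff, Set.mem_iUnion] at hb ⊢
      obtain ⟨k, hk⟩ := hb.resolve_left nofun
      rcases hS k with h | h | h <;> simp only [h, Set.mem_insert_iff, Set.mem_singleton_iff,
        Set.mem_empty_iff_false, reduceCtorEq, b.injEq, false_or] at hk
      exact .inr ⟨k, by simp [h, hk]⟩
  · rintro ⟨hs, ht, hba⟩
    refine ⟨fun j => X ∩ {a j, b j}, fun j => Set.inter_pair_eq_cases (hba j), ?_⟩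
    ext v
    cases v <;> simp [hs, ht]

end SourceSide

def ofLevels (c : Fin i → Fin 3) : Set (GV i)
  | s => True
  | t => False
  | a j => c j ≠ 0
  | b j => c j = 2

@[simp] lemma a_mem_ofLevels {c : Fin i → Fin 3} {j : Fin i} : a j ∈ ofLevels c ↔ c j ≠ 0 :=
  Iff.rfl

@[simp] lemma b_mem_ofLevels {c : Fin i → Fin 3} {j : Fin i} : b j ∈ ofLevels c ↔ c j = 2 :=
  Iff.rfl

lemma ofLevels_injective : Function.Injective (ofLevels (i := i)) := by
  intro c c' h
  funext j
  have ha : c j ≠ 0 ↔ c' j ≠ 0 := by rw [← a_mem_ofLevels, ← a_mem_ofLevels, h]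
  have hb : c j = 2 ↔ c' j = 2 := by rw [← b_mem_ofLevels, ← b_mem_ofLevels, h]
  simp only [Fin.ext_iff] at ha hb ⊢
  omega

lemma range_ofLevels : Set.range (ofLevels (i := i)) = {X | IsSourceSide X} := by
  ext X
  constructor
  · rintro ⟨c, rfl⟩
    exact ⟨trivial, id, fun j (hb : c j = 2) => show c j ≠ 0 by simp [hb]⟩
  · rintro ⟨hs, ht, hba⟩
    classical
    refine ⟨fun j => if b j ∈ X then 2 else if a j ∈ X then 1 else 0, ?_⟩
    ext v
    cases v with
    | s => exact iff_of_true trivial hs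
    | t => exact iff_of_false id ht
    | a j | b j => by_cases ha : a j ∈ X <;> by_cases hb : b j ∈ X <;> simp_all

theorem ncard_setOf_isSourceSide : {X : Set (GV i) | IsSourceSide X}.ncard = 3 ^ i := by
  rw [← range_ofLevels, ← Nat.card_coe_set_eq, Nat.card_range_of_injective ofLevels_injective]
  simp

end GV

theorem stmt_14_general (i : ℕ) :
    (∀ X : Set (GV i),
      (ConnectedIn GAdj X ∧ ConvexIn GAdj X ∧ GV.s ∈ X ∧ GV.t ∉ X) ↔
      (∃ S : Fin i → Set (GV i),
        (∀ j : Fin i, S j = ∅ ∨ S j = {GV.a j} ∨ S j = {GV.a j, GV.b j}) ∧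
        X = {GV.s} ∪ ⋃ j : Fin i, S j)) ∧
    {X : Set (GV i) | ConnectedIn GAdj X ∧ ConvexIn GAdj X ∧
        GV.s ∈ X ∧ GV.t ∉ X}.ncard = 3 ^ i := by
  refine ⟨fun X => GV.connectedIn_convexIn_iff_isSourceSide.trans
    GV.exists_pieces_iff_isSourceSide.symm, ?_⟩
  simp only [GV.connectedIn_convexIn_iff_isSourceSide]
  exact GV.ncard_setOf_isSourceSide

/-- The connected convex sets of `G_i` containing `s` but not `t` are exactly
the sets `{s} ∪ ⋃_j S_j` with each `S_j ∈ {∅, {a j}, {a j, b j}}`; there are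
exactly `3^i` of them. -/
theorem stmt_14 (i : ℕ) (hi : 1 ≤ i) :
    (∀ X : Set (GV i),
      (ConnectedIn GAdj X ∧ ConvexIn GAdj X ∧ GV.s ∈ X ∧ GV.t ∉ X) ↔
      (∃ S : Fin i → Set (GV i),
        (∀ j : Fin i, S j = ∅ ∨ S j = {GV.a j} ∨ S j = {GV.a j, GV.b j}) ∧
        X = {GV.s} ∪ ⋃ j : Fin i, S j)) ∧
    {X : Set (GV i) | ConnectedIn GAdj X ∧ ConvexIn GAdj X ∧
        GV.s ∈ X ∧ GV.t ∉ X}.ncard = 3 ^ i :=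
  stmt_14_general i
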